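/- Let E and F be complex Hilbert spaces and let T be a densely defined closable linear operator from E to F with closure T̄. Define S in E × F with domain D(T) × D(T*) by S(x, y) = (T*y, Tx). Then the operator SS* is the diagonal block operator with entries T*T̄ and TT*: its domain is D(T*T̄) × D(TT*) and SS*(x, y) = (T*(T̄x), T(T*y)). -/

import Mathlib

namespace LinearPMap

section Pcomp

variable {R E F G : Type*} [CommRing R]
  [AddCommGroup E] [Module R E]
  [AddCommGroup F] [Module R F]
  [AddCommGroup G] [Module R G]

/-- Composition of partially defined linear maps (unbounded operators), with the natural
domain `D(A ∘ B) = {x ∈ D(B) : B x ∈ D(A)}`, sending `x` to `A (B x)`. -/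
noncomputable def pcomp (A : F →ₗ.[R] G) (B : E →ₗ.[R] F) : E →ₗ.[R] G where
  domain := (A.domain.comap B.toFun).map B.domain.subtype
  toFun := A.toFun.comp <|
    (LinearMap.codRestrict A.domain
        (B.toFun.comp (A.domain.comap B.toFun).subtype) fun x => x.2).comp
      (Submodule.equivMapOfInjective B.domain.subtype
        (Submodule.injective_subtype _) (A.domain.comap B.toFun)).symm.toLinearMap

theorem mem_pcomp_domain {A : F →ₗ.[R] G} {B : E →ₗ.[R] F} {x : E} :
    x ∈ (A.pcomp B).domain ↔ ∃ hx : x ∈ B.domain, B ⟨x, hx⟩ ∈ A.domain := by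
  constructor
  · rintro ⟨y, hy, rfl⟩
    exact ⟨y.2, by simpa using hy⟩
  · rintro ⟨hx, hx'⟩
    exact ⟨⟨x, hx⟩, hx', rfl⟩

theorem pcomp_apply {A : F →ₗ.[R] G} {B : E →ₗ.[R] F} (x : (A.pcomp B).domain)
    (hx : (x : E) ∈ B.domain) (hx' : B ⟨(x : E), hx⟩ ∈ A.domain) :
    (A.pcomp B) x = A ⟨B ⟨(x : E), hx⟩, hx'⟩ := by
  set e := (Submodule.equivMapOfInjective B.domain.subtype
    (Submodule.injective_subtype _) (A.domain.comap B.toFun)) with he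
  have hy : (((e.symm x : _) : B.domain) : E) = (x : E) := by
    conv_rhs => rw [← e.apply_symm_apply x]
    rfl
  have h2 : ((e.symm x : _) : B.domain) = ⟨(x : E), hx⟩ := Subtype.ext hy
  show A.toFun _ = A.toFun _
  congr 1
  exact Subtype.ext (congrArg B.toFun h2)

end Pcomp

end LinearPMap

section Block

variable {E F : Type*}
  [NormedAddCommGroup E] [InnerProductSpace ℂ E]
  [NormedAddCommGroup F] [InnerProductSpace ℂ F]

namespace LinearPMap

/-- The off-diagonal block operator `(x, y) ↦ (B y, A x)` on the Hilbert space
`WithLp 2 (E × F)` (the product `E × F` with the inner product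
`⟨(x₁,y₁),(x₂,y₂)⟩ = ⟨x₁,x₂⟩ + ⟨y₁,y₂⟩`), with domain `D(A) × D(B)`. -/
noncomputable def blockOffDiag (A : E →ₗ.[ℂ] F) (B : F →ₗ.[ℂ] E) :
    WithLp 2 (E × F) →ₗ.[ℂ] WithLp 2 (E × F) where
  domain := (A.domain.prod B.domain).comap (WithLp.linearEquiv 2 ℂ (E × F)).toLinearMap
  toFun :=
    (WithLp.linearEquiv 2 ℂ (E × F)).symm.toLinearMap.comp <|
      LinearMap.prod
        (B.toFun.comp <| LinearMap.codRestrict B.domain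
          ((LinearMap.snd ℂ E F).comp ((WithLp.linearEquiv 2 ℂ (E × F)).toLinearMap.comp
            ((A.domain.prod B.domain).comap
              (WithLp.linearEquiv 2 ℂ (E × F)).toLinearMap).subtype))
          fun x => x.2.2)
        (A.toFun.comp <| LinearMap.codRestrict A.domain
          ((LinearMap.fst ℂ E F).comp ((WithLp.linearEquiv 2 ℂ (E × F)).toLinearMap.comp
            ((A.domain.prod B.domain).comap
              (WithLp.linearEquiv 2 ℂ (E × F)).toLinearMap).subtype))
          fun x => x.2.1)

/-- The diagonal block operator `(x, y) ↦ (A x, C y)` on the Hilbert space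
`WithLp 2 (E × F)`, with domain `D(A) × D(C)`. -/
noncomputable def blockDiag (A : E →ₗ.[ℂ] E) (C : F →ₗ.[ℂ] F) :
    WithLp 2 (E × F) →ₗ.[ℂ] WithLp 2 (E × F) where
  domain := (A.domain.prod C.domain).comap (WithLp.linearEquiv 2 ℂ (E × F)).toLinearMap
  toFun :=
    (WithLp.linearEquiv 2 ℂ (E × F)).symm.toLinearMap.comp <|
      LinearMap.prod
        (A.toFun.comp <| LinearMap.codRestrict A.domain
          ((LinearMap.fst ℂ E F).comp ((WithLp.linearEquiv 2 ℂ (E × F)).toLinearMap.comp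
            ((A.domain.prod C.domain).comap
              (WithLp.linearEquiv 2 ℂ (E × F)).toLinearMap).subtype))
          fun x => x.2.1)
        (C.toFun.comp <| LinearMap.codRestrict C.domain
          ((LinearMap.snd ℂ E F).comp ((WithLp.linearEquiv 2 ℂ (E × F)).toLinearMap.comp
            ((A.domain.prod C.domain).comap
              (WithLp.linearEquiv 2 ℂ (E × F)).toLinearMap).subtype))
          fun x => x.2.2)

end LinearPMap

end Block

open scoped LinearPMap

/-! By von Neumann's description, the graph of `T*` is the orthogonal complement of the rotated
graph of `T`; taking adjoints twice therefore yields the closure of the graph, so `T** = T̄`, and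
`D(T*)` is dense because a vector `v ⊥ D(T*)` gives `(0, v)` in the graph of `T̄`. For densely
defined `A` and `B` the adjoint of the off-diagonal operator `[[0, B], [A, 0]]` is
`[[0, A*], [B*, 0]]`; applied to `S = [[0, T*], [T, 0]]` this gives `S* = [[0, T*], [T̄, 0]]`, and
the product of two off-diagonal operators is the diagonal one `[[T* T̄, 0], [0, T T*]]`. -/

namespace Submodule

variable {𝕜 E F : Type*} [RCLike 𝕜]
  [NormedAddCommGroup E] [InnerProductSpace 𝕜 E]
  [NormedAddCommGroup F] [InnerProductSpace 𝕜 F]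

theorem isClosed_adjoint (g : Submodule 𝕜 (E × F)) : IsClosed (g.adjoint : Set (F × E)) := by
  rw [Submodule.adjoint, map_coe, LinearEquiv.coe_coe, LinearEquiv.image_eq_preimage_symm]
  exact (isClosed_orthogonal _).preimage (WithLp.prod_continuous_toLp _ _ _)

theorem le_adjoint_adjoint (g : Submodule 𝕜 (E × F)) : g ≤ g.adjoint.adjoint := by
  intro x hx
  rw [mem_adjoint_iff]
  intro a b hab
  have h := congrArg (starRingEnd 𝕜) ((mem_adjoint_iff g (a, b)).mp hab x.1 x.2 hx)
  simp only [map_sub, inner_conj_symm, map_zero] at h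
  linear_combination -h

theorem adjoint_adjoint_le_topologicalClosure [CompleteSpace E] [CompleteSpace F]
    (g : Submodule 𝕜 (E × F)) : g.adjoint.adjoint ≤ g.topologicalClosure := by
  intro x hx
  set G := g.comap (WithLp.linearEquiv 2 𝕜 (E × F)).toLinearMap
  have hGx : WithLp.toLp 2 x ∈ Gᗮᗮ := by
    rw [mem_orthogonal]
    intro w hw
    have hw' : (w.snd, -w.fst) ∈ g.adjoint := by
      rw [mem_adjoint_iff]
      intro u v huv
      have h := (mem_orthogonal _ _).mp hw (WithLp.toLp 2 (u, v)) huv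
      rw [WithLp.prod_inner_apply] at h
      rw [inner_neg_right, sub_neg_eq_add, add_comm]
      exact h
    have h := (mem_adjoint_iff _ x).mp hx _ _ hw'
    rw [inner_neg_left] at h
    rw [WithLp.prod_inner_apply, WithLp.ofLp_fst, WithLp.ofLp_snd]
    linear_combination -h
  rw [orthogonal_orthogonal_eq_closure] at hGx
  exact map_mem_closure (WithLp.prod_continuous_ofLp 2 E F) hGx fun y hy => hy

theorem adjoint_adjoint [CompleteSpace E] [CompleteSpace F] (g : Submodule 𝕜 (E × F)) :
    g.adjoint.adjoint = g.topologicalClosure :=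
  le_antisymm g.adjoint_adjoint_le_topologicalClosure
    (g.topologicalClosure_minimal g.le_adjoint_adjoint g.adjoint.isClosed_adjoint)

end Submodule

namespace LinearPMap

section Adjoint

variable {𝕜 E F : Type*} [RCLike 𝕜]
  [NormedAddCommGroup E] [InnerProductSpace 𝕜 E] [CompleteSpace E]
  [NormedAddCommGroup F] [InnerProductSpace 𝕜 F] [CompleteSpace F]
  {T : E →ₗ.[𝕜] F}

theorem graph_adjoint_adjoint_eq_graph_closure (hT : Dense (T.domain : Set E))
    (hcl : T.IsClosable) : T†.graph.adjoint = T.closure.graph := by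
  rw [adjoint_graph_eq_graph_adjoint hT, Submodule.adjoint_adjoint,
    hcl.graph_closure_eq_closure_graph]

theorem dense_adjoint_domain (hT : Dense (T.domain : Set E)) (hcl : T.IsClosable) :
    Dense (T†.domain : Set F) := by
  rw [Submodule.dense_iff_topologicalClosure_eq_top, Submodule.topologicalClosure_eq_top_iff,
    Submodule.eq_bot_iff]
  intro v hv
  have hgraph : ((0 : E), v) ∈ T†.graph.adjoint := by
    rw [Submodule.mem_adjoint_iff]
    intro a b hab
    rw [inner_zero_right, zero_sub, neg_eq_zero]
    exact (Submodule.mem_orthogonal _ _).mp hv a (mem_domain_of_mem_graph hab)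
  rw [graph_adjoint_adjoint_eq_graph_closure hT hcl] at hgraph
  exact T.closure.graph_fst_eq_zero_snd hgraph rfl

theorem adjoint_adjoint_eq_closure (hT : Dense (T.domain : Set E)) (hcl : T.IsClosable) :
    T†† = T.closure :=
  eq_of_eq_graph <| by
    rw [adjoint_graph_eq_graph_adjoint (dense_adjoint_domain hT hcl),
      graph_adjoint_adjoint_eq_graph_closure hT hcl]

end Adjoint

section Block

variable {E F : Type*}
  [NormedAddCommGroup E] [InnerProductSpace ℂ E]
  [NormedAddCommGroup F] [InnerProductSpace ℂ F]

theorem mem_blockOffDiag_domain {A : E →ₗ.[ℂ] F} {B : F →ₗ.[ℂ] E} {z : WithLp 2 (E × F)} :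
    z ∈ (A.blockOffDiag B).domain ↔ z.fst ∈ A.domain ∧ z.snd ∈ B.domain := Iff.rfl

@[simp]
theorem blockOffDiag_apply_fst (A : E →ₗ.[ℂ] F) (B : F →ₗ.[ℂ] E) (z : (A.blockOffDiag B).domain) :
    (A.blockOffDiag B z).fst = B ⟨(z : WithLp 2 (E × F)).snd, z.2.2⟩ := rfl

@[simp]
theorem blockOffDiag_apply_snd (A : E →ₗ.[ℂ] F) (B : F →ₗ.[ℂ] E) (z : (A.blockOffDiag B).domain) :
    (A.blockOffDiag B z).snd = A ⟨(z : WithLp 2 (E × F)).fst, z.2.1⟩ := rfl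

theorem mem_blockDiag_domain {A : E →ₗ.[ℂ] E} {C : F →ₗ.[ℂ] F} {z : WithLp 2 (E × F)} :
    z ∈ (A.blockDiag C).domain ↔ z.fst ∈ A.domain ∧ z.snd ∈ C.domain := Iff.rfl

theorem blockDiag_mk (A : E →ₗ.[ℂ] E) (C : F →ₗ.[ℂ] F) (z : WithLp 2 (E × F))
    (hz : z ∈ (A.blockDiag C).domain) :
    A.blockDiag C ⟨z, hz⟩ = WithLp.toLp 2 (A ⟨z.fst, hz.1⟩, C ⟨z.snd, hz.2⟩) := rfl

theorem dense_blockOffDiag_domain {A : E →ₗ.[ℂ] F} {B : F →ₗ.[ℂ] E}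
    (hA : Dense (A.domain : Set E)) (hB : Dense (B.domain : Set F)) :
    Dense ((A.blockOffDiag B).domain : Set (WithLp 2 (E × F))) := by
  have hdom : ((A.blockOffDiag B).domain : Set (WithLp 2 (E × F))) =
      (WithLp.prodContinuousLinearEquiv 2 ℂ E F).toHomeomorph ⁻¹'
        ((A.domain : Set E) ×ˢ (B.domain : Set F)) := rfl
  rw [dense_iff_closure_eq, hdom, ← Homeomorph.preimage_closure, closure_prod_eq,
    hA.closure_eq, hB.closure_eq, Set.univ_prod_univ, Set.preimage_univ]

theorem blockOffDiag_pcomp_blockOffDiag (A A' : E →ₗ.[ℂ] F) (B B' : F →ₗ.[ℂ] E) :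
    (A.blockOffDiag B).pcomp (A'.blockOffDiag B') = blockDiag (B.pcomp A') (A.pcomp B') := by
  refine ext (Submodule.ext fun z => ?_) ?_
  · simp only [mem_pcomp_domain, mem_blockDiag_domain, mem_blockOffDiag_domain]
    constructor
    · rintro ⟨⟨h₁, h₂⟩, h₂', h₁'⟩
      exact ⟨⟨h₁, h₁'⟩, h₂, h₂'⟩
    · rintro ⟨⟨h₁, h₁'⟩, h₂, h₂'⟩
      exact ⟨⟨h₁, h₂⟩, h₂', h₁'⟩
  · intro z hz hz'
    obtain ⟨h, h'⟩ := mem_pcomp_domain.mp hz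
    obtain ⟨⟨h₁, h₁'⟩, h₂, h₂'⟩ :=
      (mem_blockDiag_domain.mp hz').imp mem_pcomp_domain.mp mem_pcomp_domain.mp
    rw [pcomp_apply _ h h', blockDiag_mk, pcomp_apply _ h₁ h₁', pcomp_apply _ h₂ h₂']
    rfl

end Block

section BlockAdjoint

variable {E F : Type*}
  [NormedAddCommGroup E] [InnerProductSpace ℂ E] [CompleteSpace E]
  [NormedAddCommGroup F] [InnerProductSpace ℂ F] [CompleteSpace F]
  {A : E →ₗ.[ℂ] F} {B : F →ₗ.[ℂ] E}

theorem isFormalAdjoint_blockOffDiag (hA : Dense (A.domain : Set E))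
    (hB : Dense (B.domain : Set F)) :
    (A.blockOffDiag B).IsFormalAdjoint (B†.blockOffDiag A†) := by
  rintro ⟨z, hz⟩ ⟨w, hw⟩
  simp only [WithLp.prod_inner_apply, WithLp.ofLp_fst, WithLp.ofLp_snd, blockOffDiag_apply_fst,
    blockOffDiag_apply_snd]
  rw [add_comm]
  exact congrArg₂ (· + ·) ((adjoint_isFormalAdjoint hA).symm ⟨z.fst, hz.1⟩ ⟨w.snd, hw.2⟩)
    ((adjoint_isFormalAdjoint hB).symm ⟨z.snd, hz.2⟩ ⟨w.fst, hw.1⟩)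

theorem adjoint_blockOffDiag_domain_le (hA : Dense (A.domain : Set E))
    (hB : Dense (B.domain : Set F)) :
    (A.blockOffDiag B)†.domain ≤ (B†.blockOffDiag A†).domain := by
  intro w hw
  have hS := adjoint_isFormalAdjoint (dense_blockOffDiag_domain hA hB) ⟨w, hw⟩
  refine ⟨mem_adjoint_domain_of_exists _ ⟨((A.blockOffDiag B)† ⟨w, hw⟩).snd, fun y => ?_⟩,
    mem_adjoint_domain_of_exists _ ⟨((A.blockOffDiag B)† ⟨w, hw⟩).fst, fun x => ?_⟩⟩
  · simpa [WithLp.prod_inner_apply, (Submodule.mk_eq_zero _ (zero_mem A.domain)).mpr rfl] using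
      hS ⟨WithLp.toLp 2 (0, y), zero_mem _, y.2⟩
  · simpa [WithLp.prod_inner_apply, (Submodule.mk_eq_zero _ (zero_mem B.domain)).mpr rfl] using
      hS ⟨WithLp.toLp 2 (x, 0), x.2, zero_mem _⟩

theorem adjoint_blockOffDiag (hA : Dense (A.domain : Set E)) (hB : Dense (B.domain : Set F)) :
    (A.blockOffDiag B)† = B†.blockOffDiag A† :=
  have hle := (isFormalAdjoint_blockOffDiag hA hB).le_adjoint (dense_blockOffDiag_domain hA hB)
  (eq_of_le_of_domain_eq hle
    (le_antisymm hle.1 (adjoint_blockOffDiag_domain_le hA hB))).symm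

end BlockAdjoint

end LinearPMap

theorem stmt_8 {E F : Type*}
    [NormedAddCommGroup E] [InnerProductSpace ℂ E] [CompleteSpace E]
    [NormedAddCommGroup F] [InnerProductSpace ℂ F] [CompleteSpace F]
    (T : E →ₗ.[ℂ] F)
    (hT : Dense (T.domain : Set E))
    (hcl : T.IsClosable) :
    (T.blockOffDiag T.adjoint).pcomp (T.blockOffDiag T.adjoint).adjoint =
      LinearPMap.blockDiag (T.adjoint.pcomp T.closure) (T.pcomp T.adjoint) := by
  rw [LinearPMap.adjoint_blockOffDiag hT (LinearPMap.dense_adjoint_domain hT hcl),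
    LinearPMap.adjoint_adjoint_eq_closure hT hcl]
  exact LinearPMap.blockOffDiag_pcomp_blockOffDiag T T.closure T.adjoint T.adjoint
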